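/- For any metric space (V, d), any schedule ψ visiting a set of points, and the schedule ψ' obtained by visiting the distinct points of ψ in order of first appearance, searching each point the same total number of times as ψ does: the weight of ψ' is at most the weight of ψ and their detection probabilities are equal. Hence there exists an optimal schedule that never revisits a point. -/

import Mathlib

open Finset

/-- Weight of a schedule in a metric space: a repeated point is a search
step (cost `c`), a move between distinct points costs their distance. -/
def weightM {V : Type*} [MetricSpace V] [DecidableEq V] (c : V → ℝ) : List V → ℝ
  | [] => 0
  | [_] => 0
  | a :: b :: l => (if a = b then c a else dist a b) + weightM c (b :: l)

/-- Number of search steps at point `x`. -/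
def sCount {V : Type*} [DecidableEq V] (x : V) : List V → ℕ
  | a :: b :: l => (if a = b ∧ b = x then 1 else 0) + sCount x (b :: l)
  | _ => 0

/-- A schedule never revisits a point: it is a concatenation of blocks of
repetitions of pairwise distinct points. -/
def noRevisit {V : Type*} (l : List V) : Prop :=
  ∃ (pts : List V) (k : V → ℕ), pts.Nodup ∧
    l = (pts.map fun x => List.replicate (k x) x).flatten

/-!
The weight of a schedule is `∑ₓ (number of searches at x) · c x` plus the length of the path it
traces, a search step being a move of length `0`. Gathering all visits of each point into a
single block at its first appearance keeps the search counts and traces a subsequence of the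
original path, which by the triangle inequality is no longer. Since `c ≥ 1`, a schedule of weight
at most `T` searches every point at most `⌊T⌋` times, so the detection probability takes only
finitely many values on such schedules; regrouping a maximiser gives an optimal schedule that
never revisits a point.
-/

section PathLength

variable {V : Type*} [MetricSpace V]

def pathLength : List V → ℝ
  | a :: b :: l => dist a b + pathLength (b :: l)
  | _ => 0

@[simp]
lemma pathLength_cons_cons (a b : V) (l : List V) :
    pathLength (a :: b :: l) = dist a b + pathLength (b :: l) := rfl

lemma pathLength_nonneg : ∀ l : List V, 0 ≤ pathLength l
  | [] | [_] => le_rfl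
  | _ :: b :: l => add_nonneg dist_nonneg (pathLength_nonneg (b :: l))

lemma pathLength_le_pathLength_cons (a : V) : ∀ l : List V, pathLength l ≤ pathLength (a :: l)
  | [] => le_rfl
  | _ :: _ => le_add_of_nonneg_left dist_nonneg

lemma pathLength_cons_le_dist_add (a b : V) :
    ∀ l : List V, pathLength (a :: l) ≤ dist a b + pathLength (b :: l)
  | [] => by simp [pathLength]
  | d :: l => by
    simp only [pathLength_cons_cons]
    linarith [dist_triangle a b d]

lemma pathLength_cons_le_of_sublist {l₁ l₂ : List V} (h : l₁.Sublist l₂) (a : V) :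
    pathLength (a :: l₁) ≤ pathLength (a :: l₂) := by
  induction h generalizing a with
  | slnil => rfl
  | cons b _ ih =>
    rw [pathLength_cons_cons]
    exact (pathLength_cons_le_dist_add a b _).trans (add_le_add_right (ih b) _)
  | cons_cons b _ ih =>
    simp only [pathLength_cons_cons]
    exact add_le_add_right (ih b) _

lemma pathLength_le_of_sublist {l₁ l₂ : List V} (h : l₁.Sublist l₂) :
    pathLength l₁ ≤ pathLength l₂ := by
  induction h with
  | slnil => rfl
  | cons a _ ih => exact ih.trans (pathLength_le_pathLength_cons a _)
  | cons_cons a h _ => exact pathLength_cons_le_of_sublist h a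

lemma pathLength_replicate_append (a : V) (n : ℕ) (l : List V) :
    pathLength (List.replicate (n + 1) a ++ l) = pathLength (a :: l) := by
  induction n with
  | zero => rfl
  | succ n ih =>
    rw [List.replicate_succ, List.cons_append, ← ih, List.replicate_succ, List.cons_append,
      pathLength_cons_cons, dist_self, zero_add]

lemma pathLength_cons_flatten_replicate (k : V → ℕ) : ∀ (pts : List V) (a : V),
    pathLength (a :: (pts.map fun x => List.replicate (k x + 1) x).flatten) =
      pathLength (a :: pts)
  | [], _ => rfl
  | b :: pts, a => by
    rw [List.map_cons, List.flatten_cons, List.replicate_succ, List.cons_append,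
      pathLength_cons_cons, pathLength_cons_cons, ← List.cons_append, ← List.replicate_succ,
      pathLength_replicate_append, pathLength_cons_flatten_replicate k pts b]

lemma pathLength_flatten_replicate (k : V → ℕ) (pts : List V) :
    pathLength (pts.map fun x => List.replicate (k x + 1) x).flatten = pathLength pts := by
  cases pts with
  | nil => rfl
  | cons b pts =>
    rw [List.map_cons, List.flatten_cons, pathLength_replicate_append,
      pathLength_cons_flatten_replicate]

end PathLength

section SearchCount

variable {V : Type*} [DecidableEq V]

@[simp]
lemma sCount_cons_cons (x a b : V) (l : List V) :
    sCount x (a :: b :: l) = (if a = b ∧ b = x then 1 else 0) + sCount x (b :: l) := rfl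

lemma sCount_eq_zero_of_not_mem {x : V} : ∀ {l : List V}, x ∉ l → sCount x l = 0
  | [], _ | [_], _ => rfl
  | a :: b :: l, h => by
    have hb : ¬(a = b ∧ b = x) := fun ⟨_, hbx⟩ => h (by simp [hbx])
    rw [sCount_cons_cons, if_neg hb, sCount_eq_zero_of_not_mem (fun hx => h (.tail a hx))]

lemma sCount_eq_zero_of_nodup (x : V) : ∀ {l : List V}, l.Nodup → sCount x l = 0
  | [], _ | [_], _ => rfl
  | a :: b :: l, h => by
    have hab : a ≠ b := fun hab => (List.nodup_cons.mp h).1 (by simp [hab])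
    rw [sCount_cons_cons, if_neg (fun h => hab h.1),
      sCount_eq_zero_of_nodup x (List.nodup_cons.mp h).2]

lemma sCount_replicate_append (x a : V) (n : ℕ) (l : List V) :
    sCount x (List.replicate (n + 1) a ++ l) = (if a = x then n else 0) + sCount x (a :: l) := by
  induction n with
  | zero => simp
  | succ n ih =>
    rw [List.replicate_succ, List.cons_append, List.replicate_succ, List.cons_append,
      sCount_cons_cons, ← List.cons_append, ← List.replicate_succ, ih]
    by_cases hax : a = x
    · simp [hax]; ring
    · simp [hax]

lemma sCount_cons_flatten_replicate (x : V) (k : V → ℕ) : ∀ (pts : List V) (a : V),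
    sCount x (a :: (pts.map fun y => List.replicate (k y + 1) y).flatten) =
      pts.count x * k x + sCount x (a :: pts)
  | [], _ => by simp
  | b :: pts, a => by
    rw [List.map_cons, List.flatten_cons, List.replicate_succ, List.cons_append,
      sCount_cons_cons, sCount_cons_cons, ← List.cons_append, ← List.replicate_succ,
      sCount_replicate_append, sCount_cons_flatten_replicate x k pts b, List.count_cons]
    by_cases hbx : b = x
    · subst hbx; simp; ring
    · simp [hbx]

lemma sCount_flatten_replicate (x : V) (k : V → ℕ) (pts : List V) :
    sCount x (pts.map fun y => List.replicate (k y + 1) y).flatten =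
      pts.count x * k x + sCount x pts := by
  cases pts with
  | nil => simp
  | cons b pts =>
    rw [List.map_cons, List.flatten_cons, sCount_replicate_append,
      sCount_cons_flatten_replicate, List.count_cons]
    by_cases hbx : b = x
    · subst hbx; simp; ring
    · simp [hbx]

end SearchCount

section Weight

variable {V : Type*} [MetricSpace V] [DecidableEq V]

lemma weightM_eq_sum_add_pathLength (c : V → ℝ) {t : Finset V} :
    ∀ {l : List V}, (∀ x ∈ l, x ∈ t) →
      weightM c l = ∑ x ∈ t, (sCount x l : ℝ) * c x + pathLength l
  | [], _ | [_], _ => by simp [weightM, sCount, pathLength]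
  | a :: b :: l, hl => by
    have hstep : (if a = b then c a else dist a b) =
        ∑ x ∈ t, (if a = b ∧ b = x then (1 : ℝ) else 0) * c x + dist a b := by
      by_cases hab : a = b
      · subst hab
        simp [hl a (by simp)]
      · simp [hab]
    rw [weightM, weightM_eq_sum_add_pathLength c (fun x hx => hl x (.tail a hx)), hstep]
    simp only [sCount_cons_cons, pathLength_cons_cons, Nat.cast_add, Nat.cast_ite,
      Nat.cast_one, Nat.cast_zero, add_mul, sum_add_distrib]
    ring

lemma weightM_le_of_sCount_eq {c : V → ℝ} {l₁ l₂ : List V} (hcount : ∀ x, sCount x l₁ = sCount x l₂)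
    (hpath : pathLength l₁ ≤ pathLength l₂) : weightM c l₁ ≤ weightM c l₂ := by
  rw [weightM_eq_sum_add_pathLength c (t := l₁.toFinset ∪ l₂.toFinset) (by simp_all),
    weightM_eq_sum_add_pathLength c (t := l₁.toFinset ∪ l₂.toFinset) (by simp_all)]
  simp only [hcount]
  linarith

lemma sCount_le_weightM {c : V → ℝ} (hc : ∀ x, 1 ≤ c x) (l : List V) (x : V) :
    (sCount x l : ℝ) ≤ weightM c l := by
  have hnonneg : ∀ y, 0 ≤ (sCount y l : ℝ) * c y :=
    fun y => mul_nonneg (Nat.cast_nonneg _) (zero_le_one.trans (hc y))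
  calc (sCount x l : ℝ)
      ≤ sCount x l * c x := le_mul_of_one_le_right (Nat.cast_nonneg _) (hc x)
    _ ≤ ∑ y ∈ insert x l.toFinset, (sCount y l : ℝ) * c y :=
        single_le_sum (fun y _ => hnonneg y) (mem_insert_self x _)
    _ ≤ weightM c l := by
        rw [weightM_eq_sum_add_pathLength c (t := insert x l.toFinset) (by simp +contextual)]
        linarith [pathLength_nonneg l]

end Weight

section Regroup

variable {V : Type*} [DecidableEq V]

/-- `List.dedup` keeps last occurrences, so it is applied to the reversed list. -/
def firstOccurrences (l : List V) : List V := l.reverse.dedup.reverse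

lemma firstOccurrences_sublist (l : List V) : (firstOccurrences l).Sublist l := by
  simpa [firstOccurrences] using (List.dedup_sublist l.reverse).reverse

lemma nodup_firstOccurrences (l : List V) : (firstOccurrences l).Nodup :=
  List.nodup_reverse.mpr (List.nodup_dedup _)

@[simp]
lemma mem_firstOccurrences {x : V} {l : List V} : x ∈ firstOccurrences l ↔ x ∈ l := by
  simp [firstOccurrences]

def regroup (l : List V) : List V :=
  ((firstOccurrences l).map fun x => List.replicate (sCount x l + 1) x).flatten

lemma mem_of_mem_regroup {x : V} {l : List V} (h : x ∈ regroup l) : x ∈ l := by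
  simp only [regroup, List.mem_flatten, List.mem_map] at h
  obtain ⟨_, ⟨y, hy, rfl⟩, hx⟩ := h
  rw [List.eq_of_mem_replicate hx]
  exact mem_firstOccurrences.mp hy

lemma noRevisit_regroup (l : List V) : noRevisit (regroup l) :=
  ⟨firstOccurrences l, fun x => sCount x l + 1, nodup_firstOccurrences l, rfl⟩

@[simp]
lemma sCount_regroup (x : V) (l : List V) : sCount x (regroup l) = sCount x l := by
  rw [regroup, sCount_flatten_replicate, sCount_eq_zero_of_nodup x (nodup_firstOccurrences l),
    (nodup_firstOccurrences l).count, add_zero]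
  by_cases hx : x ∈ l
  · simp [hx]
  · simp [hx, sCount_eq_zero_of_not_mem hx]

lemma weightM_regroup_le [MetricSpace V] (c : V → ℝ) (l : List V) :
    weightM c (regroup l) ≤ weightM c l :=
  weightM_le_of_sCount_eq (fun x => sCount_regroup x l) <| by
    rw [regroup, pathLength_flatten_replicate]
    exact pathLength_le_of_sublist (firstOccurrences_sublist l)

end Regroup

lemma exists_max_image_comp_of_le {α γ β : Type*} [Preorder γ] [LocallyFiniteOrderBot γ]
    [LinearOrder β] {S : Set α} (hS : S.Nonempty) (κ : α → γ) {b : γ}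
    (hκ : ∀ a ∈ S, κ a ≤ b) (G : γ → β) : ∃ a ∈ S, ∀ a' ∈ S, G (κ a') ≤ G (κ a) := by
  have hfin : (κ '' S).Finite := (Set.finite_Iic b).subset (Set.image_subset_iff.mpr hκ)
  obtain ⟨_, ⟨a, ha, rfl⟩, hmax⟩ := Set.exists_max_image _ G hfin (hS.image κ)
  exact ⟨a, ha, fun a' ha' => hmax _ ⟨a', ha', rfl⟩⟩

theorem no_revisit_optimal_general {V : Type*} [MetricSpace V] [DecidableEq V]
    (s : Finset V) (c : V → ℝ) (hc : ∀ x, 1 ≤ c x)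
    (p β : V → ℝ) (T : ℝ) (hT : 0 ≤ T) :
    (∀ ψ : List V, (∀ x ∈ ψ, x ∈ s) → ∃ ψ' : List V,
        (∀ x ∈ ψ', x ∈ ψ) ∧ noRevisit ψ' ∧
        weightM c ψ' ≤ weightM c ψ ∧
        (∀ x, sCount x ψ' = sCount x ψ) ∧
        ∑ x ∈ s, (1 - β x ^ sCount x ψ') * p x
          = ∑ x ∈ s, (1 - β x ^ sCount x ψ) * p x) ∧
    (∃ ψo : List V, (∀ x ∈ ψo, x ∈ s) ∧ weightM c ψo ≤ T ∧ noRevisit ψo ∧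
        ∀ ψ : List V, (∀ x ∈ ψ, x ∈ s) → weightM c ψ ≤ T →
          ∑ x ∈ s, (1 - β x ^ sCount x ψ) * p x
            ≤ ∑ x ∈ s, (1 - β x ^ sCount x ψo) * p x) := by
  refine ⟨fun ψ _ => ⟨regroup ψ, fun x => mem_of_mem_regroup, noRevisit_regroup ψ,
    weightM_regroup_le c ψ, fun x => sCount_regroup x ψ, by simp⟩, ?_⟩
  let feasible : Set (List V) := {ψ | (∀ x ∈ ψ, x ∈ s) ∧ weightM c ψ ≤ T}
  have hbound : ∀ ψ ∈ feasible, (fun x : s => sCount (x : V) ψ) ≤ fun _ => ⌊T⌋₊ :=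
    fun ψ hψ x => Nat.le_floor ((sCount_le_weightM hc ψ x).trans hψ.2)
  obtain ⟨ψ, ⟨hψs, hψT⟩, hmax⟩ := exists_max_image_comp_of_le (S := feasible)
    ⟨[], by simp, by simpa [weightM] using hT⟩ _ hbound
    fun n => ∑ x : s, (1 - β x ^ n x) * p x
  refine ⟨regroup ψ, fun x hx => hψs x (mem_of_mem_regroup hx),
    (weightM_regroup_le c ψ).trans hψT, noRevisit_regroup ψ, fun ψ' hψ's hψ'T => ?_⟩
  rw [← sum_coe_sort s, ← sum_coe_sort s]
  simpa only [sCount_regroup] using hmax ψ' ⟨hψ's, hψ'T⟩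

/-- Every schedule can be replaced by a no-revisit schedule (visiting the
distinct points in order of first appearance) of at most its weight, with
the same search counts and hence the same detection probability; therefore
an optimal no-revisit schedule exists. -/
theorem no_revisit_optimal {V : Type*} [MetricSpace V] [DecidableEq V]
    (s : Finset V) (c : V → ℝ) (hc : ∀ x, 1 ≤ c x)
    (p β : V → ℝ) (hp : ∀ x, 0 ≤ p x) (hsum : ∑ x ∈ s, p x = 1)
    (hβ : ∀ x, 0 ≤ β x ∧ β x < 1) (T : ℝ) (hT : 0 ≤ T) :
    (∀ ψ : List V, (∀ x ∈ ψ, x ∈ s) → ∃ ψ' : List V,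
        (∀ x ∈ ψ', x ∈ ψ) ∧ noRevisit ψ' ∧
        weightM c ψ' ≤ weightM c ψ ∧
        (∀ x, sCount x ψ' = sCount x ψ) ∧
        ∑ x ∈ s, (1 - β x ^ sCount x ψ') * p x
          = ∑ x ∈ s, (1 - β x ^ sCount x ψ) * p x) ∧
    (∃ ψo : List V, (∀ x ∈ ψo, x ∈ s) ∧ weightM c ψo ≤ T ∧ noRevisit ψo ∧
        ∀ ψ : List V, (∀ x ∈ ψ, x ∈ s) → weightM c ψ ≤ T →
          ∑ x ∈ s, (1 - β x ^ sCount x ψ) * p x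
            ≤ ∑ x ∈ s, (1 - β x ^ sCount x ψo) * p x) :=
  no_revisit_optimal_general s c hc p β T hT
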